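/- Let q > 1 and let c : [0,∞) → [0,∞) be continuous and Lebesgue integrable on [0,∞) with (q-1) ∫₀^∞ c(r) dr < 1. If ψ : [0,∞) → [0,∞) is continuous and satisfies ψ(t) ≤ 1 + ∫₀ᵗ c(r) ψ(r)^q dr for all t ≥ 0, then ψ is globally bounded: ψ(t) ≤ (1 - (q-1) ∫₀^∞ c(r) dr)^{-1/(q-1)} for all t ≥ 0. -/

import Mathlib

open MeasureTheory

/-- global boundedness under the subcritical mass condition
`(q-1)∫₀^∞ c < 1` for the nonlinear integral inequality `ψ ≤ 1 + ∫₀ᵗ c ψ^q`. -/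
theorem bihari_global_bound
    (q : ℝ) (hq : 1 < q)
    (c : ℝ → ℝ) (hc_cont : ContinuousOn c (Set.Ici 0))
    (hc_nonneg : ∀ r, 0 ≤ r → 0 ≤ c r)
    (hc_int : IntegrableOn c (Set.Ioi 0))
    (hsmall : (q - 1) * (∫ r in Set.Ioi (0:ℝ), c r) < 1)
    (ψ : ℝ → ℝ) (hψ_cont : ContinuousOn ψ (Set.Ici 0))
    (hψ_nonneg : ∀ t, 0 ≤ t → 0 ≤ ψ t)
    (hineq : ∀ t, 0 ≤ t → ψ t ≤ 1 + ∫ r in (0:ℝ)..t, c r * ψ r ^ q) :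
    ∀ t, 0 ≤ t →
      ψ t ≤ (1 - (q - 1) * ∫ r in Set.Ioi (0:ℝ), c r) ^ (-(1 / (q - 1))) := by
  intro t ht
  set M := ∫ r in Set.Ioi (0:ℝ), c r with hMdef
  have hq0 : 0 < q - 1 := by linarith
  have hqpos : (0:ℝ) ≤ q := by linarith
  have hMnn : 0 ≤ M :=
    setIntegral_nonneg measurableSet_Ioi (fun r hr => hc_nonneg r hr.le)
  have hbpos : 0 < 1 - (q - 1) * M := by linarith
  -- the integrand
  set g : ℝ → ℝ := fun r => c r * ψ r ^ q with hgdef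
  have hg_cont : ContinuousOn g (Set.Ici 0) :=
    hc_cont.mul (hψ_cont.rpow_const (fun x _ => Or.inr hqpos))
  have hg_nonneg : ∀ r, 0 ≤ r → 0 ≤ g r := fun r hr =>
    mul_nonneg (hc_nonneg r hr) (Real.rpow_nonneg (hψ_nonneg r hr) q)
  set φ : ℝ → ℝ := fun s => 1 + ∫ r in (0:ℝ)..s, g r with hφdef
  -- φ ≥ 1 on [0,∞)
  have hφ_ge1 : ∀ s, 0 ≤ s → 1 ≤ φ s := by
    intro s hs
    have : 0 ≤ ∫ r in (0:ℝ)..s, g r :=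
      intervalIntegral.integral_nonneg hs (fun u hu => hg_nonneg u hu.1)
    simp only [hφdef]; linarith
  have hφ_pos : ∀ s, 0 ≤ s → 0 < φ s := fun s hs => lt_of_lt_of_le one_pos (hφ_ge1 s hs)
  have hψ_le_φ : ∀ s, 0 ≤ s → ψ s ≤ φ s := fun s hs => hineq s hs
  -- interval integrability of g and c on subintervals of [0,∞)
  have hg_ii : ∀ s, 0 ≤ s → IntervalIntegrable g volume 0 s := by
    intro s hs
    apply (hg_cont.mono _).intervalIntegrable
    rw [Set.uIcc_of_le hs]
    exact fun x hx => hx.1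
  have hc_ii : ∀ s, 0 ≤ s → IntervalIntegrable c volume 0 s := by
    intro s hs
    apply (hc_cont.mono _).intervalIntegrable
    rw [Set.uIcc_of_le hs]
    exact fun x hx => hx.1
  -- derivative of φ at interior points
  have hφ' : ∀ s, 0 < s → HasDerivAt φ (g s) s := by
    intro s hs
    have h1 : StronglyMeasurableAtFilter g (nhds s) := by
      refine ⟨Set.Ioi 0, IsOpen.mem_nhds isOpen_Ioi hs, ?_⟩
      exact (hg_cont.mono (fun x hx => le_of_lt hx)).aestronglyMeasurable measurableSet_Ioi
    have h2 : ContinuousAt g s :=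
      (hg_cont s hs.le).continuousAt (Ici_mem_nhds hs)
    exact ((intervalIntegral.integral_hasDerivAt_right (hg_ii s hs.le) h1 h2).const_add 1)
  have hcprim' : ∀ s, 0 < s → HasDerivAt (fun u => ∫ r in (0:ℝ)..u, c r) (c s) s := by
    intro s hs
    have h1 : StronglyMeasurableAtFilter c (nhds s) := by
      refine ⟨Set.Ioi 0, IsOpen.mem_nhds isOpen_Ioi hs, ?_⟩
      exact (hc_cont.mono (fun x hx => le_of_lt hx)).aestronglyMeasurable measurableSet_Ioi
    have h2 : ContinuousAt c s :=
      (hc_cont s hs.le).continuousAt (Ici_mem_nhds hs)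
    exact intervalIntegral.integral_hasDerivAt_right (hc_ii s hs.le) h1 h2
  -- the auxiliary function H
  set H : ℝ → ℝ := fun s => (1 - φ s ^ (1 - q)) / (q - 1) - ∫ r in (0:ℝ)..s, c r with hHdef
  have hH' : ∀ s, 0 < s →
      HasDerivAt H (φ s ^ (-q) * g s - c s) s := by
    intro s hs
    have hφs : 0 < φ s := hφ_pos s hs.le
    have hrp : HasDerivAt (fun u : ℝ => u ^ (1 - q)) ((1 - q) * φ s ^ (1 - q - 1)) (φ s) :=
      Real.hasDerivAt_rpow_const (Or.inl hφs.ne')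
    have hcomp : HasDerivAt (fun u => φ u ^ (1 - q)) ((1 - q) * φ s ^ (1 - q - 1) * g s) s :=
      hrp.comp s (hφ' s hs)
    have hmain : HasDerivAt H
        ((-((1 - q) * φ s ^ (1 - q - 1) * g s)) / (q - 1) - c s) s := by
      exact ((hcomp.const_sub 1).div_const (q - 1)).sub (hcprim' s hs)
    convert hmain using 1
    have h1 : (1 : ℝ) - q - 1 = -q := by ring
    rw [h1]
    field_simp
    ring
  -- H is antitone on [0, t]
  have hφ_contOn : ContinuousOn φ (Set.Icc 0 t) := by
    have : IntegrableOn g (Set.uIcc 0 t) := by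
      rw [Set.uIcc_of_le ht]
      apply (hg_cont.mono fun x hx => hx.1).integrableOn_compact isCompact_Icc
    have := intervalIntegral.continuousOn_primitive_interval this
    rw [Set.uIcc_of_le ht] at this
    exact continuousOn_const.add this
  have hcprim_contOn : ContinuousOn (fun s => ∫ r in (0:ℝ)..s, c r) (Set.Icc 0 t) := by
    have : IntegrableOn c (Set.uIcc 0 t) := by
      rw [Set.uIcc_of_le ht]
      apply (hc_cont.mono fun x hx => hx.1).integrableOn_compact isCompact_Icc
    have := intervalIntegral.continuousOn_primitive_interval this
    rw [Set.uIcc_of_le ht] at this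
    exact this
  have hH_contOn : ContinuousOn H (Set.Icc 0 t) := by
    apply ContinuousOn.sub _ hcprim_contOn
    apply ContinuousOn.div_const
    apply continuousOn_const.sub
    apply hφ_contOn.rpow_const
    intro x hx
    exact Or.inl (hφ_pos x hx.1).ne'
  have hH_anti : AntitoneOn H (Set.Icc 0 t) := by
    apply antitoneOn_of_deriv_nonpos (convex_Icc 0 t) hH_contOn
    · intro x hx
      rw [interior_Icc] at hx
      exact (hH' x hx.1).differentiableAt.differentiableWithinAt
    · intro x hx
      rw [interior_Icc] at hx
      rw [(hH' x hx.1).deriv]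
      have hφx : 0 < φ x := hφ_pos x hx.1.le
      have hcx : 0 ≤ c x := hc_nonneg x hx.1.le
      have h1 : ψ x ^ q ≤ φ x ^ q :=
        Real.rpow_le_rpow (hψ_nonneg x hx.1.le) (hψ_le_φ x hx.1.le) hqpos
      have h2 : φ x ^ (-q) * g x ≤ φ x ^ (-q) * (c x * φ x ^ q) := by
        apply mul_le_mul_of_nonneg_left _ (Real.rpow_nonneg hφx.le _)
        exact mul_le_mul_of_nonneg_left h1 hcx
      have h3 : φ x ^ (-q) * (c x * φ x ^ q) = c x := by
        rw [mul_comm (c x), ← mul_assoc, ← Real.rpow_add hφx]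
        simp
      linarith [h2.trans_eq h3]
  -- conclude H t ≤ H 0 = 0
  have hH0 : H 0 = 0 := by
    simp only [hHdef, hφdef, intervalIntegral.integral_same, add_zero, Real.one_rpow,
      sub_self, zero_div]
  have hHt : H t ≤ 0 := by
    rw [← hH0]
    exact hH_anti (Set.left_mem_Icc.mpr ht) (Set.mem_Icc.mpr ⟨ht, le_rfl⟩) ht
  -- ∫₀ᵗ c ≤ M
  have hint_le : (∫ r in (0:ℝ)..t, c r) ≤ M := by
    rw [intervalIntegral.integral_of_le ht, hMdef]
    apply setIntegral_mono_set hc_int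
    · exact (ae_restrict_iff' measurableSet_Ioi).mpr (ae_of_all _ fun r hr => hc_nonneg r hr.le)
    · exact (Set.Ioc_subset_Ioi_self).eventuallyLE
  -- derive the bound on φ t ^ (1-q)
  have hA : 1 - (q - 1) * M ≤ φ t ^ (1 - q) := by
    have h1 : (1 - φ t ^ (1 - q)) / (q - 1) ≤ M := by
      have := hHt
      simp only [hHdef] at this
      linarith [hint_le]
    have h2 : 1 - φ t ^ (1 - q) ≤ (q - 1) * M := by
      rw [div_le_iff₀ hq0] at h1
      linarith [h1]
    linarith
  -- convert to the bound on φ t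
  have hφt_pos : 0 < φ t := hφ_pos t ht
  have hexp : φ t = (φ t ^ (1 - q)) ^ (-(1 / (q - 1))) := by
    have he : (1 - q) * (-(1 / (q - 1))) = 1 := by field_simp; ring
    rw [← Real.rpow_mul hφt_pos.le, he, Real.rpow_one]
  have hfinal : (φ t ^ (1 - q)) ^ (-(1 / (q - 1))) ≤ (1 - (q - 1) * M) ^ (-(1 / (q - 1))) := by
    apply Real.rpow_le_rpow_of_nonpos hbpos hA
    have : 0 < 1 / (q - 1) := by positivity
    linarith
  calc ψ t ≤ φ t := hψ_le_φ t ht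
    _ = (φ t ^ (1 - q)) ^ (-(1 / (q - 1))) := hexp
    _ ≤ (1 - (q - 1) * M) ^ (-(1 / (q - 1))) := hfinal
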